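/- For every l ≥ 1 and every x ∈ [0,1), dB¹_l(x)·dB²_l(x) = 0; and for every integer N ≥ 1 and 0 ≤ n < N⁴, E[dX¹_{n+1}·dX²_{n+1} | F_{nN}] = 0 almost everywhere. -/

import Mathlib

open MeasureTheory Filter
open scoped ENNReal MeasureTheory

noncomputable section

/-- Lebesgue measure restricted to `Ω = [0,1)`. -/
def P : Measure ℝ := volume.restrict (Set.Ico 0 1)

/-- Rademacher variable `ε_k` : `+1` on the right half of the dyadic interval of
generation `k` containing `x`, `-1` otherwise. -/
def rad (k : ℕ) (x : ℝ) : ℝ := if Odd ⌊(2 : ℝ) ^ (k + 1) * x⌋ then 1 else -1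

/-- Increment `dB¹_l = 1{ε_{l-1} = -1} ε_l √(2δ)`. -/
def dB1 (δ : ℝ) (l : ℕ) (x : ℝ) : ℝ :=
  (if rad (l - 1) x = -1 then 1 else 0) * rad l x * Real.sqrt (2 * δ)

/-- Increment `dB²_l = 1{ε_{l-1} = +1} ε_l √(2δ)`. -/
def dB2 (δ : ℝ) (l : ℕ) (x : ℝ) : ℝ :=
  (if rad (l - 1) x = 1 then 1 else 0) * rad l x * Real.sqrt (2 * δ)

/-- First coordinate of the discrete random walk. -/
def B1 (δ : ℝ) (k : ℕ) (x : ℝ) : ℝ := ∑ l ∈ Finset.Icc 1 k, dB1 δ l x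

/-- Second coordinate of the discrete random walk. -/
def B2 (δ : ℝ) (k : ℕ) (x : ℝ) : ℝ := ∑ l ∈ Finset.Icc 1 k, dB2 δ l x

/-- The planar random walk `B_k = (B¹_k, B²_k)`. -/
def Bpt (δ : ℝ) (k : ℕ) (x : ℝ) : ℝ × ℝ := (B1 δ k x, B2 δ k x)

/-- Euclidean norm of the planar walk at step `k`. -/
def Bnorm (δ : ℝ) (k : ℕ) (x : ℝ) : ℝ := Real.sqrt (B1 δ k x ^ 2 + B2 δ k x ^ 2)

/-- Coarse increment `dX¹_{n+1} = Σ_{l=1}^N dB¹_{nN+l}`. -/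
def dX1 (δ : ℝ) (N n : ℕ) (x : ℝ) : ℝ := ∑ l ∈ Finset.Icc 1 N, dB1 δ (n * N + l) x

/-- Coarse increment `dX²_{n+1} = Σ_{l=1}^N dB²_{nN+l}`. -/
def dX2 (δ : ℝ) (N n : ℕ) (x : ℝ) : ℝ := ∑ l ∈ Finset.Icc 1 N, dB2 δ (n * N + l) x

/-- The σ-algebra `F_k` generated by `ε_0, …, ε_k`. -/
def Ffil (k : ℕ) : MeasurableSpace ℝ :=
  ⨆ i ∈ Finset.Iic k, MeasurableSpace.comap (rad i) (inferInstance : MeasurableSpace ℝ)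

/-- The stopping index `n_ε(x)` : the minimum of `N⁴` and the first `n ∈ [1, N⁴]`
with `|X_n(x)| > 1 - ε`, where `X_n = B_{nN}`. -/
def nstop (δ ε : ℝ) (N : ℕ) (x : ℝ) : ℕ :=
  sInf (insert (N ^ 4) {n | 1 ≤ n ∧ n ≤ N ^ 4 ∧ 1 - ε < Bnorm δ (n * N) x})

/-!
Each Rademacher variable `ε_L` has mean zero on every dyadic interval of generation `L`,
so `E[g ε_L | F_k] = 0` whenever `k < L` and `g` is a function of `⌊2^L x⌋`, i.e. of
`ε_0, …, ε_{L-1}`. Expanding `dX¹ dX²` as `Σ dB¹_a dB²_b`, the diagonal terms vanish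
pointwise because the two indicators are complementary, and each off-diagonal term is of the
form `g ε_L` with `L = max a b`.
-/

instance isFiniteMeasure_P : IsFiniteMeasure P := by
  rw [P]
  infer_instance

/-- `x` lies in the `dyadicFloor j x`-th interval of `D_j`. -/
def dyadicFloor (j : ℕ) (x : ℝ) : ℤ := ⌊(2 : ℝ) ^ j * x⌋

def dyadicSigma (j : ℕ) : MeasurableSpace ℝ :=
  MeasurableSpace.comap (dyadicFloor j) inferInstance

lemma measurable_dyadicFloor (j : ℕ) : Measurable (dyadicFloor j) :=
  (measurable_const_mul _).floor

lemma dyadicSigma_le (j : ℕ) : dyadicSigma j ≤ (inferInstance : MeasurableSpace ℝ) :=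
  (measurable_dyadicFloor j).comap_le

lemma dyadicFloor_eq_ediv {i j : ℕ} (hij : i ≤ j) (x : ℝ) :
    dyadicFloor i x = dyadicFloor j x / 2 ^ (j - i) := by
  have hx : (2 : ℝ) ^ i * x = (2 : ℝ) ^ j * x / ((2 ^ (j - i) : ℕ) : ℝ) := by
    rw [eq_div_iff (by positivity), Nat.cast_pow, Nat.cast_ofNat, mul_right_comm, ← pow_add,
      Nat.add_sub_cancel' hij]
  rw [dyadicFloor, dyadicFloor, hx, Int.floor_div_natCast]
  norm_num

lemma rad_eq_comp_dyadicFloor {i j : ℕ} (hij : i < j) :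
    rad i =
      (fun m : ℤ => if Odd (m / 2 ^ (j - (i + 1))) then (1 : ℝ) else -1) ∘ dyadicFloor j := by
  funext x
  rw [Function.comp_apply, ← dyadicFloor_eq_ediv hij]
  rfl

lemma measurable_rad_dyadicSigma {i j : ℕ} (hij : i < j) :
    Measurable[dyadicSigma j] (rad i) := by
  rw [rad_eq_comp_dyadicFloor hij]
  exact Measurable.of_discrete.comp (comap_measurable _)

lemma measurable_rad (k : ℕ) : Measurable (rad k) :=
  (measurable_rad_dyadicSigma k.lt_succ_self).mono (dyadicSigma_le _) le_rfl

lemma Ffil_le_dyadicSigma {k j : ℕ} (hkj : k < j) : Ffil k ≤ dyadicSigma j :=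
  iSup₂_le fun _ hi =>
    (measurable_rad_dyadicSigma ((Finset.mem_Iic.mp hi).trans_lt hkj)).comap_le

lemma rad_eq_one_or (k : ℕ) (x : ℝ) : rad k x = 1 ∨ rad k x = -1 := by
  unfold rad
  split_ifs <;> simp

lemma abs_rad (k : ℕ) (x : ℝ) : |rad k x| = 1 := by
  rcases rad_eq_one_or k x with h | h <;> simp [h]

lemma integrable_rad (k : ℕ) : Integrable (rad k) P :=
  .of_bound (measurable_rad k).aestronglyMeasurable 1
    (.of_forall fun x => (abs_rad k x).le)

lemma preimage_dyadicFloor_singleton (j : ℕ) (m : ℤ) :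
    dyadicFloor j ⁻¹' {m} = Set.Ico ((m : ℝ) / 2 ^ j) ((m + 1) / 2 ^ j) := by
  ext x
  simp only [Set.mem_preimage, Set.mem_singleton_iff, dyadicFloor, Int.floor_eq_iff, Set.mem_Ico,
    div_le_iff₀ (by positivity : (0 : ℝ) < 2 ^ j), lt_div_iff₀ (by positivity : (0 : ℝ) < 2 ^ j),
    mul_comm x]

lemma volume_real_dyadicFloor_fiber (j : ℕ) (m : ℤ) :
    volume.real (dyadicFloor j ⁻¹' {m}) = (2 ^ j)⁻¹ := by
  rw [preimage_dyadicFloor_singleton, Real.volume_real_Ico, ← sub_div, add_sub_cancel_left,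
    one_div, max_eq_left (by positivity)]

lemma preimage_dyadicFloor_Ico (j : ℕ) :
    dyadicFloor j ⁻¹' Set.Ico 0 (2 ^ j) = Set.Ico 0 1 := by
  ext x
  have h : (0 : ℝ) < 2 ^ j := by positivity
  simp only [Set.mem_preimage, Set.mem_Ico, dyadicFloor, Int.floor_nonneg, Int.floor_lt]
  push_cast
  rw [mul_nonneg_iff_of_pos_left h, mul_lt_iff_lt_one_right h]

/-- `ε_L` is `-1` on the first half and `+1` on the second. -/
lemma preimage_dyadicFloor_singleton_eq_union (L : ℕ) (m : ℤ) :
    dyadicFloor L ⁻¹' {m} =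
      dyadicFloor (L + 1) ⁻¹' {2 * m} ∪ dyadicFloor (L + 1) ⁻¹' {2 * m + 1} := by
  ext x
  have h : dyadicFloor L x = dyadicFloor (L + 1) x / 2 := by
    simpa using dyadicFloor_eq_ediv L.le_succ x
  simp only [Set.mem_union, Set.mem_preimage, Set.mem_singleton_iff, h]
  omega

lemma setIntegral_rad_dyadicFloor_fiber_volume (L : ℕ) (m : ℤ) :
    ∫ x in dyadicFloor L ⁻¹' {m}, rad L x = 0 := by
  have hmeas (n : ℤ) : MeasurableSet (dyadicFloor (L + 1) ⁻¹' {n}) :=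
    measurable_dyadicFloor _ (measurableSet_singleton n)
  have hfin (n : ℤ) : volume (dyadicFloor (L + 1) ⁻¹' {n}) ≠ ⊤ := by
    rw [preimage_dyadicFloor_singleton]
    exact measure_Ico_lt_top.ne
  have hrad (n : ℤ) :
      ∀ x ∈ dyadicFloor (L + 1) ⁻¹' {n}, rad L x = if Odd n then 1 else -1 :=
    fun x hx => by rw [rad, ← dyadicFloor, hx]
  have hint (n : ℤ) : IntegrableOn (rad L) (dyadicFloor (L + 1) ⁻¹' {n}) :=
    (integrableOn_const (hfin n)).congr_fun (fun x hx => (hrad n x hx).symm) (hmeas n)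
  have hdisj :
      Disjoint (dyadicFloor (L + 1) ⁻¹' {2 * m}) (dyadicFloor (L + 1) ⁻¹' {2 * m + 1}) :=
    Disjoint.preimage _ (Set.disjoint_singleton.mpr (by omega))
  rw [preimage_dyadicFloor_singleton_eq_union,
    setIntegral_union hdisj (hmeas _) (hint _) (hint _),
    setIntegral_congr_fun (hmeas _) (hrad _), setIntegral_congr_fun (hmeas _) (hrad _),
    setIntegral_const, setIntegral_const, volume_real_dyadicFloor_fiber,
    volume_real_dyadicFloor_fiber, if_neg (by simp [parity_simps]), if_pos (by simp [parity_simps])]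
  simp

lemma setIntegral_rad_dyadicFloor_fiber (L : ℕ) (m : ℤ) :
    ∫ x in dyadicFloor L ⁻¹' {m}, rad L x ∂P = 0 := by
  rw [P, Measure.restrict_restrict (measurable_dyadicFloor L (measurableSet_singleton m)),
    ← preimage_dyadicFloor_Ico, ← Set.preimage_inter]
  by_cases hm : m ∈ Set.Ico 0 (2 ^ L)
  · rw [Set.singleton_inter_of_mem hm]
    exact setIntegral_rad_dyadicFloor_fiber_volume L m
  · rw [Set.singleton_inter_eq_empty.mpr hm, Set.preimage_empty, Measure.restrict_empty,
      integral_zero_measure]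

lemma setIntegral_rad_eq_zero {L : ℕ} {s : Set ℝ} (hs : MeasurableSet[dyadicSigma L] s) :
    ∫ x in s, rad L x ∂P = 0 := by
  obtain ⟨T, -, rfl⟩ := hs
  have hfib : dyadicFloor L ⁻¹' T = ⋃ m : T, dyadicFloor L ⁻¹' {(m : ℤ)} := by
    rw [← Set.preimage_iUnion, Set.iUnion_singleton_eq_range, Subtype.range_coe]
  rw [hfib, integral_iUnion (fun _ => measurable_dyadicFloor L (measurableSet_singleton _))
    (fun _ _ hab => (Set.disjoint_singleton.mpr (Subtype.coe_ne_coe.mpr hab)).preimage _)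
    (integrable_rad L).integrableOn]
  simp [setIntegral_rad_dyadicFloor_fiber]

lemma condExp_rad_eq_zero (L : ℕ) : P[rad L | dyadicSigma L] =ᵐ[P] 0 :=
  (ae_eq_condExp_of_forall_setIntegral_eq (dyadicSigma_le L) (integrable_rad L)
    (fun _ _ _ => integrableOn_zero)
    (fun _ hs _ => by rw [setIntegral_rad_eq_zero hs, integral_zero])
    stronglyMeasurable_const.aestronglyMeasurable).symm

lemma condExp_mul_rad_eq_zero {m : MeasurableSpace ℝ} {L : ℕ} (hm : m ≤ dyadicSigma L)
    {g : ℝ → ℝ} (hg : StronglyMeasurable[dyadicSigma L] g) (hgr : Integrable (g * rad L) P) :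
    P[g * rad L | m] =ᵐ[P] 0 := by
  have hL : P[g * rad L | dyadicSigma L] =ᵐ[P] 0 := by
    filter_upwards [condExp_mul_of_stronglyMeasurable_left hg hgr (integrable_rad L),
      condExp_rad_eq_zero L] with x hx hx0
    rw [hx, Pi.mul_apply, hx0, Pi.zero_apply, mul_zero]
  calc P[g * rad L | m] =ᵐ[P] P[P[g * rad L | dyadicSigma L] | m] :=
        (condExp_condExp_of_le hm (dyadicSigma_le L)).symm
    _ =ᵐ[P] P[0 | m] := condExp_congr_ae hL
    _ = 0 := condExp_zero

lemma dB1_mul_dB2_self (δ : ℝ) (l : ℕ) (x : ℝ) : dB1 δ l x * dB2 δ l x = 0 := by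
  rcases rad_eq_one_or (l - 1) x with h | h <;> norm_num [dB1, dB2, h]

lemma abs_dB1_le (δ : ℝ) (l : ℕ) (x : ℝ) : |dB1 δ l x| ≤ √(2 * δ) := by
  rw [dB1, abs_mul, abs_mul, abs_rad, mul_one, abs_of_nonneg (Real.sqrt_nonneg _)]
  exact mul_le_of_le_one_left (Real.sqrt_nonneg _) (by split_ifs <;> norm_num)

lemma abs_dB2_le (δ : ℝ) (l : ℕ) (x : ℝ) : |dB2 δ l x| ≤ √(2 * δ) := by
  rw [dB2, abs_mul, abs_mul, abs_rad, mul_one, abs_of_nonneg (Real.sqrt_nonneg _)]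
  exact mul_le_of_le_one_left (Real.sqrt_nonneg _) (by split_ifs <;> norm_num)

lemma measurable_ite_rad_eq_dyadicSigma {i j : ℕ} (hij : i < j) (c : ℝ) :
    Measurable[dyadicSigma j] fun x => if rad i x = c then (1 : ℝ) else 0 :=
  Measurable.ite (measurable_rad_dyadicSigma hij (measurableSet_singleton c))
    measurable_const measurable_const

lemma measurable_dB1_dyadicSigma (δ : ℝ) {l j : ℕ} (hlj : l < j) :
    Measurable[dyadicSigma j] (dB1 δ l) :=
  ((measurable_ite_rad_eq_dyadicSigma ((l.sub_le 1).trans_lt hlj) _).mul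
    (measurable_rad_dyadicSigma hlj)).mul_const _

lemma measurable_dB2_dyadicSigma (δ : ℝ) {l j : ℕ} (hlj : l < j) :
    Measurable[dyadicSigma j] (dB2 δ l) :=
  ((measurable_ite_rad_eq_dyadicSigma ((l.sub_le 1).trans_lt hlj) _).mul
    (measurable_rad_dyadicSigma hlj)).mul_const _

lemma integrable_dB1_mul_dB2 (δ : ℝ) (l₁ l₂ : ℕ) :
    Integrable (fun x => dB1 δ l₁ x * dB2 δ l₂ x) P := by
  have h₁ := (measurable_dB1_dyadicSigma δ l₁.lt_succ_self).mono (dyadicSigma_le _) le_rfl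
  have h₂ := (measurable_dB2_dyadicSigma δ l₂.lt_succ_self).mono (dyadicSigma_le _) le_rfl
  refine .of_bound (h₁.mul h₂).aestronglyMeasurable (√(2 * δ) * √(2 * δ))
    (.of_forall fun x => ?_)
  rw [Real.norm_eq_abs, abs_mul]
  exact mul_le_mul (abs_dB1_le δ l₁ x) (abs_dB2_le δ l₂ x) (abs_nonneg _) (Real.sqrt_nonneg _)

/-- The later of the two increments contributes a factor `ε_L` that is independent of all
earlier ones. -/
lemma condExp_dB1_mul_dB2_eq_zero (δ : ℝ) {k l₁ l₂ : ℕ} (h₁ : k < l₁) (h₂ : k < l₂) :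
    P[fun x => dB1 δ l₁ x * dB2 δ l₂ x | Ffil k] =ᵐ[P] 0 := by
  have hint := integrable_dB1_mul_dB2 δ l₁ l₂
  rcases lt_trichotomy l₁ l₂ with h | rfl | h
  · have hfac : (fun x => dB1 δ l₁ x * dB2 δ l₂ x) =
        (fun x => dB1 δ l₁ x * ((if rad (l₂ - 1) x = 1 then 1 else 0) * √(2 * δ))) *
          rad l₂ := by
      funext x
      simp only [dB2, Pi.mul_apply]
      ring
    rw [hfac] at hint ⊢
    refine condExp_mul_rad_eq_zero (Ffil_le_dyadicSigma h₂) (Measurable.stronglyMeasurable ?_)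
      hint
    exact (measurable_dB1_dyadicSigma δ h).mul
      ((measurable_ite_rad_eq_dyadicSigma (by omega) _).mul_const _)
  · simp only [dB1_mul_dB2_self]
    exact condExp_zero.eventuallyEq
  · have hfac : (fun x => dB1 δ l₁ x * dB2 δ l₂ x) =
        (fun x => (if rad (l₁ - 1) x = -1 then 1 else 0) * √(2 * δ) * dB2 δ l₂ x) *
          rad l₁ := by
      funext x
      simp only [dB1, Pi.mul_apply]
      ring
    rw [hfac] at hint ⊢
    refine condExp_mul_rad_eq_zero (Ffil_le_dyadicSigma h₁) (Measurable.stronglyMeasurable ?_)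
      hint
    exact ((measurable_ite_rad_eq_dyadicSigma (by omega) _).mul_const _).mul
      (measurable_dB2_dyadicSigma δ h)

theorem statement8_general (δ : ℝ) :
    (∀ l : ℕ, 1 ≤ l → ∀ x ∈ Set.Ico (0 : ℝ) 1, dB1 δ l x * dB2 δ l x = 0) ∧
    (∀ N : ℕ, 1 ≤ N → ∀ n : ℕ, n < N ^ 4 →
      P[fun x => dX1 δ N n x * dX2 δ N n x|Ffil (n * N)] =ᵐ[P] 0) := by
  refine ⟨fun l _ x _ => dB1_mul_dB2_self δ l x, fun N _ n _ => ?_⟩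
  set I := Finset.Icc 1 N ×ˢ Finset.Icc 1 N
  have hexpand : (fun x => dX1 δ N n x * dX2 δ N n x) =
      ∑ p ∈ I, fun x => dB1 δ (n * N + p.1) x * dB2 δ (n * N + p.2) x := by
    funext x
    simp only [dX1, dX2, Finset.sum_mul_sum, Finset.sum_product, I, Finset.sum_apply]
  have hterms : ∀ᵐ x ∂P, ∀ p ∈ I,
      P[fun x => dB1 δ (n * N + p.1) x * dB2 δ (n * N + p.2) x | Ffil (n * N)] x = 0 :=
    (Filter.eventually_all_finset I).mpr fun p hp => by
      simp only [I, Finset.mem_product, Finset.mem_Icc] at hp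
      exact condExp_dB1_mul_dB2_eq_zero δ (by omega) (by omega)
  rw [hexpand]
  filter_upwards [condExp_finsetSum (fun p _ => integrable_dB1_mul_dB2 δ _ _) _, hterms]
    with x hsum hzero
  rw [hsum, Finset.sum_apply]
  exact Finset.sum_eq_zero hzero

/-- the increments `dB¹_l` and `dB²_l` are pointwise orthogonal, and the
mixed conditional second moment of the coarse increments vanishes. -/
theorem statement8 (δ : ℝ) (hδ : 0 < δ) :
    (∀ l : ℕ, 1 ≤ l → ∀ x ∈ Set.Ico (0 : ℝ) 1, dB1 δ l x * dB2 δ l x = 0) ∧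
    (∀ N : ℕ, 1 ≤ N → ∀ n : ℕ, n < N ^ 4 →
      P[fun x => dX1 δ N n x * dX2 δ N n x|Ffil (n * N)] =ᵐ[P] 0) :=
  statement8_general δ

end
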